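/- Let R be a finite commutative ring with identity and P a proper prime ideal. Every maximal clique of Γ_P(R) has the form (P \ {0}) ∪ {v} for some v ∈ R \ P; consequently the clique number of Γ_P(R) equals |P|. -/

import Mathlib

def primeIdealGraph (R : Type*) [CommRing R] (P : Ideal R) :
    SimpleGraph {x : R // x ≠ 0} where
  Adj x y := x ≠ y ∧ (x : R) * y ∈ P
  symm := by
    constructor
    rintro x y ⟨h, hm⟩
    exact ⟨h.symm, by rwa [mul_comm]⟩
  loopless := by constructor; rintro x ⟨h, _⟩; exact h rfl

def joinGraph {α β : Type*} (G : SimpleGraph α) (H : SimpleGraph β) :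
    SimpleGraph (α ⊕ β) where
  Adj u v :=
    Sum.elim (fun x => Sum.elim (fun y => G.Adj x y) (fun _ => True) v)
             (fun x => Sum.elim (fun _ => True) (fun y => H.Adj x y) v) u
  symm := by constructor; rintro (x|x) (y|y) h <;> simp_all [SimpleGraph.adj_comm]
  loopless := by constructor; rintro (x|x) h <;> simp_all

/-!
Two distinct vertices are adjacent as soon as one of them lies in `P`, and, `P` being prime,
only then. So a clique has at most one vertex outside `P`, and a clique containing such a
vertex `v` lies in the clique `(P \ {0}) ∪ {v}`; a maximal clique that avoided the outside
entirely would lie in `(P \ {0}) ∪ {1}`. Sending the vertex outside `P` to `0` maps any clique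
injectively into `P`, and `(P \ {0}) ∪ {v}` onto `P`.
-/

namespace primeIdealGraph

open Set

variable {R : Type*} [CommRing R] {P : Ideal R}

def cliqueWith (P : Ideal R) (v : {z : R // z ≠ 0}) : Set {z : R // z ≠ 0} :=
  {x | (x : R) ∈ P} ∪ {v}

open Classical in
noncomputable def collapse (P : Ideal R) (x : {z : R // z ≠ 0}) : R :=
  if (x : R) ∈ P then x else 0

theorem collapse_mem (x : {z : R // z ≠ 0}) : collapse P x ∈ P := by
  unfold collapse
  split_ifs with hx
  · exact hx
  · exact P.zero_mem

theorem adj_of_mem_left {x y : {z : R // z ≠ 0}} (hx : (x : R) ∈ P) (hxy : x ≠ y) :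
    (primeIdealGraph R P).Adj x y :=
  ⟨hxy, P.mul_mem_right _ hx⟩

theorem mem_or_mem_of_adj [P.IsPrime] {x y : {z : R // z ≠ 0}}
    (h : (primeIdealGraph R P).Adj x y) : (x : R) ∈ P ∨ (y : R) ∈ P :=
  Ideal.IsPrime.mem_or_mem ‹_› h.2

theorem isClique_cliqueWith (v : {z : R // z ≠ 0}) :
    (primeIdealGraph R P).IsClique (cliqueWith P v) := by
  rintro x (hx | rfl) y hy hxy
  · exact adj_of_mem_left hx hxy
  · obtain hy | rfl := hy
    · exact (adj_of_mem_left hy hxy.symm).symm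
    · exact absurd rfl hxy

theorem eq_of_isClique_of_notMem [P.IsPrime] {s : Set {z : R // z ≠ 0}}
    (hs : (primeIdealGraph R P).IsClique s) {x y : {z : R // z ≠ 0}} (hx : x ∈ s) (hy : y ∈ s)
    (hxP : (x : R) ∉ P) (hyP : (y : R) ∉ P) : x = y := by
  by_contra hxy
  exact (mem_or_mem_of_adj (hs hx hy hxy)).elim hxP hyP

theorem subset_cliqueWith [P.IsPrime] {s : Set {z : R // z ≠ 0}}
    (hs : (primeIdealGraph R P).IsClique s) {v : {z : R // z ≠ 0}} (hv : v ∈ s)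
    (hvP : (v : R) ∉ P) : s ⊆ cliqueWith P v := by
  intro x hx
  by_cases hxP : (x : R) ∈ P
  · exact Or.inl hxP
  · exact Or.inr (eq_of_isClique_of_notMem hs hx hv hxP hvP)

theorem exists_vertex_notMem (hP : P ≠ ⊤) : ∃ v : {z : R // z ≠ 0}, (v : R) ∉ P := by
  have h1P : (1 : R) ∉ P := P.ne_top_iff_one.mp hP
  exact ⟨⟨1, fun h => h1P (h ▸ P.zero_mem)⟩, h1P⟩

theorem exists_notMem_of_maximal (hP : P ≠ ⊤) {s : Set {z : R // z ≠ 0}}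
    (hs : Maximal (primeIdealGraph R P).IsClique s) : ∃ v ∈ s, (v : R) ∉ P := by
  obtain ⟨u, huP⟩ := exists_vertex_notMem hP
  by_contra! hsP
  have hs_le : s ⊆ cliqueWith P u := fun x hx => Or.inl (hsP x hx)
  exact huP (hsP u (hs.2 (isClique_cliqueWith u) hs_le (Or.inr rfl)))

theorem exists_eq_cliqueWith_of_maximal [P.IsPrime] {s : Set {z : R // z ≠ 0}}
    (hs : Maximal (primeIdealGraph R P).IsClique s) :
    ∃ v : {z : R // z ≠ 0}, (v : R) ∉ P ∧ s = cliqueWith P v := by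
  obtain ⟨v, hv, hvP⟩ := exists_notMem_of_maximal Ideal.IsPrime.ne_top' hs
  have hs_le := subset_cliqueWith hs.1 hv hvP
  exact ⟨v, hvP, hs_le.antisymm (hs.2 (isClique_cliqueWith v) hs_le)⟩

theorem injOn_collapse [P.IsPrime] {s : Set {z : R // z ≠ 0}}
    (hs : (primeIdealGraph R P).IsClique s) : InjOn (collapse P) s := by
  intro x hx y hy hxy
  unfold collapse at hxy
  by_cases hxP : (x : R) ∈ P <;> by_cases hyP : (y : R) ∈ P <;> simp only [hxP, hyP] at hxy
  · exact Subtype.ext hxy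
  · exact absurd hxy x.2
  · exact absurd hxy.symm y.2
  · exact eq_of_isClique_of_notMem hs hx hy hxP hyP

theorem image_collapse_cliqueWith {v : {z : R // z ≠ 0}} (hvP : (v : R) ∉ P) :
    collapse P '' cliqueWith P v = P := by
  refine (image_subset_iff.mpr fun x _ => collapse_mem x).antisymm fun r hr => ?_
  by_cases hr0 : r = 0
  · exact ⟨v, Or.inr rfl, by simp [collapse, hvP, hr0]⟩
  · exact ⟨⟨r, hr0⟩, Or.inl hr, if_pos hr⟩

theorem ncard_cliqueWith [P.IsPrime] {v : {z : R // z ≠ 0}} (hvP : (v : R) ∉ P) :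
    (cliqueWith P v).ncard = Nat.card P := by
  rw [← (injOn_collapse (isClique_cliqueWith v)).ncard_image, image_collapse_cliqueWith hvP]
  exact (Nat.card_coe_set_eq (P : Set R)).symm

theorem ncard_le_of_isClique [Finite R] [P.IsPrime] {s : Set {z : R // z ≠ 0}}
    (hs : (primeIdealGraph R P).IsClique s) : s.ncard ≤ Nat.card P := by
  rw [← (injOn_collapse hs).ncard_image, ← SetLike.coe_sort_coe, Nat.card_coe_set_eq]
  exact ncard_le_ncard (image_subset_iff.mpr fun x _ => collapse_mem x)

theorem isGreatest_cliqueNumber [Finite R] [P.IsPrime] :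
    IsGreatest {n : ℕ | ∃ s : Finset {z : R // z ≠ 0}, (primeIdealGraph R P).IsNClique n s}
      (Nat.card P) := by
  obtain ⟨v, hvP⟩ := exists_vertex_notMem (Ideal.IsPrime.ne_top' (I := P))
  refine ⟨⟨(toFinite (cliqueWith P v)).toFinset, ?_⟩, ?_⟩
  · refine ⟨by simpa using isClique_cliqueWith v, ?_⟩
    rw [← ncard_cliqueWith hvP, ncard_eq_toFinset_card]
  · rintro n ⟨s, hs⟩
    rw [← hs.card_eq, ← ncard_coe_finset]
    exact ncard_le_of_isClique hs.isClique

end primeIdealGraph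

theorem stmt_4_general (R : Type*) [CommRing R] [Fintype R] (P : Ideal R)
    [P.IsPrime] :
    (∀ s : Set {z : R // z ≠ 0},
        Maximal (primeIdealGraph R P).IsClique s →
        ∃ v : {z : R // z ≠ 0}, (v : R) ∉ P ∧
          s = {x : {z : R // z ≠ 0} | (x : R) ∈ P} ∪ {v}) ∧
    IsGreatest {n : ℕ | ∃ s : Finset {z : R // z ≠ 0},
        (primeIdealGraph R P).IsNClique n s} (Nat.card P) :=
  ⟨fun _ hs => primeIdealGraph.exists_eq_cliqueWith_of_maximal hs,
    primeIdealGraph.isGreatest_cliqueNumber⟩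

/-- Every maximal clique of `Γ_P(R)` is `(P \ {0}) ∪ {v}` for some `v ∉ P`;
consequently the clique number of `Γ_P(R)` equals `|P|`. -/
theorem stmt_4 (R : Type*) [CommRing R] [Fintype R] (P : Ideal R)
    [P.IsPrime] (hP : P ≠ ⊤) :
    (∀ s : Set {z : R // z ≠ 0},
        Maximal (primeIdealGraph R P).IsClique s →
        ∃ v : {z : R // z ≠ 0}, (v : R) ∉ P ∧
          s = {x : {z : R // z ≠ 0} | (x : R) ∈ P} ∪ {v}) ∧
    IsGreatest {n : ℕ | ∃ s : Finset {z : R // z ≠ 0},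
        (primeIdealGraph R P).IsNClique n s} (Nat.card P) :=
  stmt_4_general R P
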